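/- arXiv:2507.13230 — 2 statements merged into one kernel-verified Lean document; each statement's English description precedes it below -/
import Mathlib

section
/- Let β ∈ (0,2], θ > 2−β, N ≥ 2, and set f(r) = exp(r^β/(N−1)), ρ(r) = (1+r²)^{-θ/2}. Then the function h(r) := ∫_r^∞ [∫₀^s ρ(ξ)(f(ξ)+1)^{N−1} dξ] / (f(s)+1)^{N−1} ds is well-defined (the double integral is finite) for every r ≥ 0, is positive, and h(r) → 0 as r → ∞. -/
open MeasureTheory Set Filter

private lemma contOn_rpow_exp (r β : ℝ) {s : Set ℝ} (hs : ∀ x ∈ s, x ≠ 0) :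
    ContinuousOn (fun x : ℝ => x ^ r * Real.exp (x ^ β)) s := by
  refine ContinuousOn.mul ?_ ?_
  · exact fun x hx => (Real.continuousAt_rpow_const x r (Or.inl (hs x hx))).continuousWithinAt
  · exact Real.continuous_exp.comp_continuousOn
      (fun x hx => (Real.continuousAt_rpow_const x β (Or.inl (hs x hx))).continuousWithinAt)

/-- Key derivative estimate: the primitive of `x^(-θ) e^{x^β}` is bounded by
`(2/β) x^{1-β-θ} e^{x^β}` beyond some point `M ≥ 1`. -/
private lemma aux_deriv_bound (β θ : ℝ) (hβ0 : 0 < β) (hθ2 : 2 < β + θ) :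
    ∃ M : ℝ, 1 ≤ M ∧ ∀ s, M ≤ s →
      ∫ x in M..s, x ^ (-θ) * Real.exp (x ^ β)
        ≤ (2 / β) * (s ^ (1 - β - θ) * Real.exp (s ^ β)) := by
  set q : ℝ := 1 - β - θ with hqdef
  set c : ℝ := 2 * (β + θ - 1) / β with hcdef
  have hcpos : 0 < c := by
    apply div_pos (by linarith) hβ0
  set M : ℝ := max 1 (c ^ (1 / β)) with hMdef
  have hM1 : (1 : ℝ) ≤ M := le_max_left _ _
  have hMpos : (0 : ℝ) < M := lt_of_lt_of_le one_pos hM1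
  refine ⟨M, hM1, fun s hs => ?_⟩
  have hspos : (0 : ℝ) < s := lt_of_lt_of_le hMpos hs
  set ψ : ℝ → ℝ := fun x => (2 / β) * (x ^ q * Real.exp (x ^ β)) with hψdef
  set D : ℝ → ℝ := fun x =>
    (2 / β) * (q * x ^ (q - 1) * Real.exp (x ^ β)
      + x ^ q * (Real.exp (x ^ β) * (β * x ^ (β - 1)))) with hDdef
  have hpos_of_mem : ∀ x ∈ uIcc M s, x ≠ 0 := by
    rw [uIcc_of_le hs]
    intro x hx
    exact (lt_of_lt_of_le hMpos hx.1).ne'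
  have hderiv : ∀ x ∈ uIcc M s, HasDerivAt ψ (D x) x := by
    intro x hx
    have hx0 : x ≠ 0 := hpos_of_mem x hx
    have h1 : HasDerivAt (fun y : ℝ => y ^ q) (q * x ^ (q - 1)) x :=
      Real.hasDerivAt_rpow_const (Or.inl hx0)
    have h2 : HasDerivAt (fun y : ℝ => Real.exp (y ^ β))
        (Real.exp (x ^ β) * (β * x ^ (β - 1))) x :=
      (Real.hasDerivAt_rpow_const (Or.inl hx0)).exp
    exact (h1.mul h2).const_mul _
  have crp : ∀ r : ℝ, ContinuousOn (fun x : ℝ => x ^ r) (uIcc M s) :=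
    fun r x hx =>
      (Real.continuousAt_rpow_const x r (Or.inl (hpos_of_mem x hx))).continuousWithinAt
  have cexp : ContinuousOn (fun x : ℝ => Real.exp (x ^ β)) (uIcc M s) :=
    Real.continuous_exp.comp_continuousOn (crp β)
  have hDcont : ContinuousOn D (uIcc M s) :=
    continuousOn_const.mul
      (((continuousOn_const.mul (crp (q - 1))).mul cexp).add
        ((crp q).mul (cexp.mul (continuousOn_const.mul (crp (β - 1))))))
  have hDint : IntervalIntegrable D volume M s := hDcont.intervalIntegrable
  have hLint : IntervalIntegrable (fun x => x ^ (-θ) * Real.exp (x ^ β)) volume M s :=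
    (contOn_rpow_exp (-θ) β hpos_of_mem).intervalIntegrable
  have hftc : ∫ x in M..s, D x = ψ s - ψ M :=
    intervalIntegral.integral_eq_sub_of_hasDerivAt hderiv hDint
  have hDge : ∀ x ∈ Icc M s, x ^ (-θ) * Real.exp (x ^ β) ≤ D x := by
    intro x hx
    have hxpos : (0 : ℝ) < x := lt_of_lt_of_le hMpos hx.1
    have hxβpos : (0 : ℝ) < x ^ β := Real.rpow_pos_of_pos hxpos β
    have hcx : c ≤ x ^ β := by
      have h1 : c ^ (1 / β) ≤ x := le_trans (le_max_right _ _) hx.1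
      have h2 : (c ^ (1 / β)) ^ β ≤ x ^ β :=
        Real.rpow_le_rpow (Real.rpow_nonneg hcpos.le _) h1 hβ0.le
      rwa [← Real.rpow_mul hcpos.le, one_div, inv_mul_cancel₀ hβ0.ne', Real.rpow_one] at h2
    have hcxinv : c * x ^ (-β) ≤ 1 := by
      rw [Real.rpow_neg hxpos.le, ← div_eq_mul_inv, div_le_one hxβpos]
      exact hcx
    have hD_eq : D x = x ^ (-θ) * Real.exp (x ^ β) * (2 - c * x ^ (-β)) := by
      have e1 : x ^ (q - 1) = x ^ (-θ) * x ^ (-β) := by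
        rw [← Real.rpow_add hxpos]; congr 1; rw [hqdef]; ring
      have e2 : x ^ q * x ^ (β - 1) = x ^ (-θ) := by
        rw [← Real.rpow_add hxpos]; congr 1; rw [hqdef]; ring
      rw [hDdef]
      simp only
      rw [e1]
      have e3 : x ^ q * (Real.exp (x ^ β) * (β * x ^ (β - 1)))
          = β * (x ^ q * x ^ (β - 1)) * Real.exp (x ^ β) := by ring
      rw [e3, e2, hcdef, hqdef]
      field_simp
      ring
    rw [hD_eq]
    have hpos : 0 < x ^ (-θ) * Real.exp (x ^ β) :=
      mul_pos (Real.rpow_pos_of_pos hxpos _) (Real.exp_pos _)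
    nlinarith [hpos, hcxinv]
  have hmono : ∫ x in M..s, x ^ (-θ) * Real.exp (x ^ β) ≤ ∫ x in M..s, D x :=
    intervalIntegral.integral_mono_on hs hLint hDint hDge
  have hψM : 0 ≤ ψ M := by
    apply mul_nonneg (by positivity)
    exact mul_nonneg (Real.rpow_nonneg hMpos.le _) (Real.exp_pos _).le
  calc ∫ x in M..s, x ^ (-θ) * Real.exp (x ^ β) ≤ ψ s - ψ M := by rw [← hftc]; exact hmono
    _ ≤ ψ s := by linarith
    _ = (2 / β) * (s ^ (1 - β - θ) * Real.exp (s ^ β)) := by rw [hψdef]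

/-- Lemma 7.6 (finiteness and decay): with `f(r) = exp(r^β/(N−1))`,
`ρ(r) = (1+r²)^{-θ/2}`, `β ∈ (0,2]`, `θ > 2−β`, the function
`h(r) = ∫_r^∞ [∫₀^s ρ(ξ)(f(ξ)+1)^{N−1} dξ]/(f(s)+1)^{N−1} ds`
is well-defined, positive, and tends to `0` at infinity. -/
theorem stmt6 (β θ : ℝ) (N : ℕ) (hβ0 : 0 < β) (hβ2 : β ≤ 2)
    (hθ : 2 - β < θ) (hN : 2 ≤ N) :
    let f : ℝ → ℝ := fun r => Real.exp (r ^ β / (N - 1 : ℝ))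
    let ρ : ℝ → ℝ := fun r => (1 + r ^ 2) ^ (-(θ / 2))
    let F : ℝ → ℝ := fun s =>
      (∫ ξ in (0:ℝ)..s, ρ ξ * (f ξ + 1) ^ (N - 1)) / (f s + 1) ^ (N - 1)
    (∀ r : ℝ, 0 ≤ r → IntegrableOn F (Ioi r)) ∧
    (∀ r : ℝ, 0 ≤ r → 0 < ∫ s in Ioi r, F s) ∧
    Tendsto (fun r : ℝ => ∫ s in Ioi r, F s) atTop (nhds 0) := by
  intro f ρ F
  have hN2 : (2:ℝ) ≤ (N:ℝ) := by exact_mod_cast hN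
  have hN1pos : (0:ℝ) < (N:ℝ) - 1 := by linarith
  have hNnat : (1:ℕ) ≤ N := by omega
  have hcast : ((N - 1 : ℕ) : ℝ) = (N:ℝ) - 1 := by
    rw [Nat.cast_sub hNnat, Nat.cast_one]
  have hθ0 : (0:ℝ) < θ := by linarith
  have hθ2 : 2 < β + θ := by linarith
  have hqlt : (1 - β - θ) < -1 := by linarith
  -- continuity of the basic functions
  have hfc : Continuous f :=
    Real.continuous_exp.comp ((Real.continuous_rpow_const hβ0.le).div_const _)
  have hρc : Continuous ρ := by
    refine Continuous.rpow_const (by continuity) (fun x => Or.inl ?_)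
    positivity
  set G : ℝ → ℝ := fun ξ => ρ ξ * (f ξ + 1) ^ (N - 1) with hG
  have hfpos : ∀ ξ : ℝ, 0 < f ξ := fun ξ => Real.exp_pos _
  have hGc : Continuous G := hρc.mul ((hfc.add continuous_const).pow _)
  have hden_pos : ∀ s : ℝ, (0:ℝ) < (f s + 1) ^ (N - 1) :=
    fun s => pow_pos (by linarith [hfpos s]) _
  have hGpos : ∀ ξ, 0 < G ξ := fun ξ =>
    mul_pos (Real.rpow_pos_of_pos (by positivity) _) (hden_pos ξ)
  set K : ℝ → ℝ := fun s => ∫ ξ in (0:ℝ)..s, G ξ with hK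
  have hKc : Continuous K :=
    intervalIntegral.continuous_primitive (fun a b => hGc.intervalIntegrable a b) 0
  have hFeq : ∀ s, F s = K s / (f s + 1) ^ (N - 1) := fun s => rfl
  have hFc : Continuous F :=
    hKc.div ((hfc.add continuous_const).pow _) (fun s => (hden_pos s).ne')
  have hKpos : ∀ s, 0 < s → 0 < K s := fun s hs =>
    intervalIntegral.intervalIntegral_pos_of_pos_on (hGc.intervalIntegrable 0 s)
      (fun x _ => hGpos x) hs
  have hFpos : ∀ s, 0 < s → 0 < F s := fun s hs => div_pos (hKpos s hs) (hden_pos s)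
  have hFnonneg : ∀ s, 0 ≤ s → 0 ≤ F s := by
    intro s hs
    rcases eq_or_lt_of_le hs with h | h
    · have hK0 : K 0 = 0 := intervalIntegral.integral_same
      rw [hFeq, ← h, hK0, zero_div]
    · exact (hFpos s h).le
  -- exponential sandwich for the power factor
  have hfn : ∀ ξ : ℝ, f ξ ^ (N - 1) = Real.exp (ξ ^ β) := by
    intro ξ
    show Real.exp (ξ ^ β / ((N:ℝ) - 1)) ^ (N - 1) = _
    rw [← Real.exp_nat_mul, hcast]
    congr 1
    field_simp
  have hf1 : ∀ ξ : ℝ, 0 ≤ ξ → 1 ≤ f ξ := fun ξ hξ =>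
    Real.one_le_exp (div_nonneg (Real.rpow_nonneg hξ β) hN1pos.le)
  have hlow : ∀ ξ : ℝ, 0 ≤ ξ → Real.exp (ξ ^ β) ≤ (f ξ + 1) ^ (N - 1) := by
    intro ξ hξ
    rw [← hfn ξ]
    exact pow_le_pow_left₀ (hfpos ξ).le (by linarith [hfpos ξ]) _
  have hup : ∀ ξ : ℝ, 0 ≤ ξ → (f ξ + 1) ^ (N - 1) ≤ 2 ^ (N - 1) * Real.exp (ξ ^ β) := by
    intro ξ hξ
    calc (f ξ + 1) ^ (N - 1) ≤ (2 * f ξ) ^ (N - 1) :=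
          pow_le_pow_left₀ (by linarith [hfpos ξ]) (by linarith [hf1 ξ hξ]) _
      _ = 2 ^ (N - 1) * f ξ ^ (N - 1) := mul_pow _ _ _
      _ = 2 ^ (N - 1) * Real.exp (ξ ^ β) := by rw [hfn]
  have hρle : ∀ ξ : ℝ, 1 ≤ ξ → ρ ξ ≤ ξ ^ (-θ) := by
    intro ξ hξ
    have hξ0 : (0:ℝ) < ξ := lt_of_lt_of_le one_pos hξ
    have h2 : (1 + ξ ^ 2 : ℝ) ^ (-(θ / 2)) ≤ (ξ ^ 2 : ℝ) ^ (-(θ / 2)) :=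
      Real.rpow_le_rpow_of_nonpos (by positivity) (by linarith) (by linarith)
    refine le_trans h2 (le_of_eq ?_)
    rw [← Real.rpow_natCast ξ 2, ← Real.rpow_mul hξ0.le]
    congr 1
    push_cast
    ring
  obtain ⟨M, hM1, hbound⟩ := aux_deriv_bound β θ hβ0 hθ2
  have hMpos : (0:ℝ) < M := lt_of_lt_of_le one_pos hM1
  -- bound on K beyond M
  have hKbound : ∀ s, M ≤ s →
      K s ≤ K M + 2 ^ (N - 1) * ((2 / β) * (s ^ (1 - β - θ) * Real.exp (s ^ β))) := by
    intro s hs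
    have hsplit : K M + (∫ ξ in M..s, G ξ) = K s :=
      intervalIntegral.integral_add_adjacent_intervals (hGc.intervalIntegrable 0 M)
        (hGc.intervalIntegrable M s)
    have hne : ∀ x ∈ uIcc M s, x ≠ 0 := by
      rw [uIcc_of_le hs]
      exact fun x hx => (lt_of_lt_of_le hMpos hx.1).ne'
    have hRint : IntervalIntegrable (fun ξ : ℝ => (2:ℝ) ^ (N - 1) *
        (ξ ^ (-θ) * Real.exp (ξ ^ β))) volume M s :=
      (continuousOn_const.mul (contOn_rpow_exp (-θ) β hne)).intervalIntegrable
    have hGle : ∀ ξ ∈ Icc M s, G ξ ≤ 2 ^ (N - 1) * (ξ ^ (-θ) * Real.exp (ξ ^ β)) := by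
      intro ξ hξ
      have hξ1 : (1:ℝ) ≤ ξ := le_trans hM1 hξ.1
      have hξ0 : (0:ℝ) ≤ ξ := by linarith
      calc G ξ = ρ ξ * (f ξ + 1) ^ (N - 1) := rfl
        _ ≤ ξ ^ (-θ) * (2 ^ (N - 1) * Real.exp (ξ ^ β)) :=
            mul_le_mul (hρle ξ hξ1) (hup ξ hξ0) (hden_pos ξ).le (Real.rpow_nonneg hξ0 _)
        _ = 2 ^ (N - 1) * (ξ ^ (-θ) * Real.exp (ξ ^ β)) := by ring
    have h2 : (∫ ξ in M..s, G ξ) ≤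
        ∫ ξ in M..s, 2 ^ (N - 1) * (ξ ^ (-θ) * Real.exp (ξ ^ β)) :=
      intervalIntegral.integral_mono_on hs (hGc.intervalIntegrable M s) hRint hGle
    have h3 : (∫ ξ in M..s, (2:ℝ) ^ (N - 1) * (ξ ^ (-θ) * Real.exp (ξ ^ β)))
        = 2 ^ (N - 1) * ∫ ξ in M..s, ξ ^ (-θ) * Real.exp (ξ ^ β) :=
      intervalIntegral.integral_const_mul _ _
    have h4 := hbound s hs
    have h5 : (0:ℝ) ≤ 2 ^ (N - 1) := by positivity
    nlinarith [mul_le_mul_of_nonneg_left h4 h5]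
  -- lower bound on the exponential
  set m : ℕ := 1 + ⌈(θ - 1) / β⌉₊ with hm
  have hm1 : (1:ℝ) ≤ (m:ℝ) := by
    have : (0:ℝ) ≤ (⌈(θ - 1) / β⌉₊ : ℝ) := Nat.cast_nonneg _
    rw [hm]; push_cast; linarith
  have hexp_low : ∀ s : ℝ, 1 ≤ s →
      Real.exp (-(s ^ β)) ≤ (m:ℝ) ^ m * s ^ (1 - β - θ) := by
    intro s hs1
    have hs0 : (0:ℝ) < s := lt_of_lt_of_le one_pos hs1
    set x := s ^ β with hxdef
    have hx0 : (0:ℝ) ≤ x := Real.rpow_nonneg hs0.le β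
    have hmpos : (0:ℝ) < (m:ℝ) := by linarith
    have h1 : x / m ≤ Real.exp (x / m) := by linarith [Real.add_one_le_exp (x / m)]
    have h2 : x ^ m ≤ (m:ℝ) ^ m * Real.exp x := by
      have h3 : (x / m) ^ m ≤ Real.exp (x / m) ^ m := pow_le_pow_left₀ (by positivity) h1 m
      have h4 : Real.exp (x / m) ^ m = Real.exp x := by
        rw [← Real.exp_nat_mul]
        congr 1
        field_simp
      calc x ^ m = (m:ℝ) ^ m * (x / m) ^ m := by
            rw [div_pow]; field_simp
        _ ≤ (m:ℝ) ^ m * Real.exp (x / m) ^ m :=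
            mul_le_mul_of_nonneg_left h3 (by positivity)
        _ = (m:ℝ) ^ m * Real.exp x := by rw [h4]
    have hmβ : β + θ - 1 ≤ β * m := by
      have := Nat.le_ceil ((θ - 1) / β)
      have h6 : θ - 1 ≤ β * ⌈(θ - 1) / β⌉₊ := by
        rw [mul_comm, ← div_le_iff₀ hβ0] at *
        exact this
      rw [hm]; push_cast; nlinarith
    have h5 : s ^ (β + θ - 1) ≤ x ^ m := by
      calc s ^ (β + θ - 1) ≤ s ^ (β * m) := Real.rpow_le_rpow_of_exponent_le hs1 hmβ
        _ = (s ^ β) ^ (m:ℝ) := Real.rpow_mul hs0.le β m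
        _ = x ^ m := by rw [Real.rpow_natCast, hxdef]
    have hsp : (0:ℝ) < s ^ (β + θ - 1) := Real.rpow_pos_of_pos hs0 _
    have hEpos : (0:ℝ) < Real.exp x := Real.exp_pos _
    have hq : s ^ (1 - β - θ) = (s ^ (β + θ - 1))⁻¹ := by
      rw [show (1 - β - θ) = -(β + θ - 1) by ring, Real.rpow_neg hs0.le]
    rw [Real.exp_neg, hq, ← div_eq_mul_inv, le_div_iff₀ hsp]
    calc (Real.exp x)⁻¹ * s ^ (β + θ - 1) ≤ (Real.exp x)⁻¹ * ((m:ℝ) ^ m * Real.exp x) :=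
          mul_le_mul_of_nonneg_left (le_trans h5 h2) (by positivity)
      _ = (m:ℝ) ^ m := by field_simp
  -- the master pointwise bound for F
  set C : ℝ := K M * (m:ℝ) ^ m + 2 ^ (N - 1) * (2 / β) with hCdef
  have hKMnn : 0 ≤ K M := (hKpos M hMpos).le
  have hFle : ∀ s, M ≤ s → F s ≤ C * s ^ (1 - β - θ) := by
    intro s hs
    have hs1 : (1:ℝ) ≤ s := le_trans hM1 hs
    have hs0 : (0:ℝ) < s := by linarith
    have hE : (0:ℝ) < Real.exp (s ^ β) := Real.exp_pos _
    have hKsnn : 0 ≤ K s := (hKpos s hs0).le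
    have h1 : F s ≤ K s / Real.exp (s ^ β) := by
      rw [hFeq]
      exact div_le_div_of_nonneg_left hKsnn hE (hlow s hs0.le)
    have h2 : K s / Real.exp (s ^ β) ≤
        (K M + 2 ^ (N - 1) * ((2 / β) * (s ^ (1 - β - θ) * Real.exp (s ^ β))))
          / Real.exp (s ^ β) :=
      (div_le_div_iff_of_pos_right hE).mpr (hKbound s hs)
    have h3 : (K M + 2 ^ (N - 1) * ((2 / β) * (s ^ (1 - β - θ) * Real.exp (s ^ β))))
          / Real.exp (s ^ β)
        = K M * Real.exp (-(s ^ β)) + 2 ^ (N - 1) * (2 / β) * s ^ (1 - β - θ) := by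
      rw [Real.exp_neg]
      field_simp
    have h4 : K M * Real.exp (-(s ^ β)) ≤ K M * ((m:ℝ) ^ m * s ^ (1 - β - θ)) :=
      mul_le_mul_of_nonneg_left (hexp_low s hs1) hKMnn
    calc F s ≤ K s / Real.exp (s ^ β) := h1
      _ ≤ _ := h2
      _ = K M * Real.exp (-(s ^ β)) + 2 ^ (N - 1) * (2 / β) * s ^ (1 - β - θ) := h3
      _ ≤ K M * ((m:ℝ) ^ m * s ^ (1 - β - θ))
            + 2 ^ (N - 1) * (2 / β) * s ^ (1 - β - θ) := by linarith
      _ = C * s ^ (1 - β - θ) := by rw [hCdef]; ring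
  -- integrability
  have hIntM : IntegrableOn F (Ioi M) := by
    have hg : IntegrableOn (fun s : ℝ => C * s ^ (1 - β - θ)) (Ioi M) :=
      (integrableOn_Ioi_rpow_of_lt hqlt hMpos).const_mul C
    refine Integrable.mono' hg hFc.aestronglyMeasurable.restrict ?_
    filter_upwards [ae_restrict_mem measurableSet_Ioi] with x hx
    rw [Real.norm_eq_abs, abs_of_nonneg (hFnonneg x (le_of_lt (hMpos.trans (mem_Ioi.mp hx))))]
    exact hFle x (le_of_lt (mem_Ioi.mp hx))
  have hInt0 : IntegrableOn F (Ioi 0) := by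
    rw [← Ioc_union_Ioi_eq_Ioi hMpos.le]
    exact integrableOn_union.mpr ⟨hFc.integrableOn_Ioc, hIntM⟩
  have hIntAll : ∀ r : ℝ, 0 ≤ r → IntegrableOn F (Ioi r) :=
    fun r hr => hInt0.mono_set (Ioi_subset_Ioi hr)
  refine ⟨hIntAll, ?_, ?_⟩
  · -- positivity of the integral
    intro r hr
    refine (setIntegral_pos_iff_support_of_nonneg_ae ?_ (hIntAll r hr)).mpr ?_
    · filter_upwards [ae_restrict_mem measurableSet_Ioi] with x hx
      exact hFnonneg x (le_trans hr hx.le)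
    · have hsub : Ioi r ⊆ Function.support F ∩ Ioi r := fun x hx =>
        ⟨(hFpos x (lt_of_le_of_lt hr hx)).ne', hx⟩
      calc (0:ENNReal) < volume (Ioi r) := by simp [Real.volume_Ioi]
        _ ≤ volume (Function.support F ∩ Ioi r) := measure_mono hsub
  · -- decay at infinity
    have h1 : Tendsto (fun r : ℝ => ∫ s in (0:ℝ)..r, F s) atTop
        (nhds (∫ s in Ioi 0, F s)) :=
      intervalIntegral_tendsto_integral_Ioi 0 hInt0 tendsto_id
    have h2 : Tendsto (fun r : ℝ => (∫ s in Ioi 0, F s) - ∫ s in (0:ℝ)..r, F s)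
        atTop (nhds 0) := by
      have := (tendsto_const_nhds (x := ∫ s in Ioi 0, F s) (f := atTop)).sub h1
      simpa using this
    refine h2.congr' ?_
    filter_upwards [eventually_ge_atTop (0:ℝ)] with r hr
    have hsplit : ∫ s in Ioi 0, F s = (∫ s in Ioc 0 r, F s) + ∫ s in Ioi r, F s := by
      rw [← setIntegral_union (Ioc_disjoint_Ioi le_rfl) measurableSet_Ioi
        (hInt0.mono_set Ioc_subset_Ioi_self) (hIntAll r hr), Ioc_union_Ioi_eq_Ioi hr]
    rw [intervalIntegral.integral_of_le hr]
    linarith [hsplit]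
end

section
/- Let β ∈ (0,2], θ > 2−β, N ≥ 2, f(r) = exp(r^β/(N−1)), ρ(r) = (1+r²)^{-θ/2}, and h(r) := ∫_r^∞ [∫₀^s ρ(ξ)(f(ξ)+1)^{N−1} dξ]/(f(s)+1)^{N−1} ds. Then h satisfies the radial supersolution inequality h''(r) + (N−1)(f'(r)/f(r)) h'(r) ≤ −ρ(r) for all r > 0. -/
open MeasureTheory Set

namespace Stmt7Aux

noncomputable def F (β : ℝ) (N : ℕ) (r : ℝ) : ℝ := Real.exp (r ^ β / (N - 1 : ℝ))
noncomputable def P (θ : ℝ) (r : ℝ) : ℝ := (1 + r ^ 2) ^ (-(θ / 2))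
noncomputable def Fd (β : ℝ) (N : ℕ) (r : ℝ) : ℝ := F β N r * (β * r ^ (β - 1) / ((N : ℝ) - 1))
noncomputable def A (β θ : ℝ) (N : ℕ) (s : ℝ) : ℝ :=
  ∫ ξ in (0:ℝ)..s, P θ ξ * (F β N ξ + 1) ^ (N - 1)
noncomputable def G (β θ : ℝ) (N : ℕ) (s : ℝ) : ℝ := A β θ N s / (F β N s + 1) ^ (N - 1)
noncomputable def Gd (β θ : ℝ) (N : ℕ) (s : ℝ) : ℝ :=
  (P θ s * (F β N s + 1) ^ (N - 1) * (F β N s + 1) ^ (N - 1) -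
    A β θ N s * (↑(N - 1) * (F β N s + 1) ^ (N - 1 - 1) * Fd β N s)) /
    ((F β N s + 1) ^ (N - 1)) ^ 2

variable {β θ : ℝ} {N : ℕ}

lemma F_pos (r : ℝ) : 0 < F β N r := Real.exp_pos _

lemma F_one_le (hβ0 : 0 < β) (hr : 0 ≤ r) (hN : 2 ≤ N) : 1 ≤ F β N r := by
  have h1 : (0:ℝ) ≤ r ^ β := Real.rpow_nonneg hr β
  have h2 : (0:ℝ) < (N:ℝ) - 1 := by
    have : (2:ℝ) ≤ (N:ℝ) := by exact_mod_cast hN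
    linarith
  exact Real.one_le_exp (div_nonneg h1 h2.le)

lemma cont_F (hβ0 : 0 < β) : Continuous (F β N) := by
  have h : Continuous fun r : ℝ => r ^ β := by
    rw [continuous_iff_continuousAt]
    exact fun x => Real.continuousAt_rpow_const x β (Or.inr hβ0.le)
  exact Real.continuous_exp.comp (h.div_const _)

lemma cont_P : Continuous (P θ) := by
  apply Continuous.rpow_const (by continuity)
  intro x
  left
  positivity

lemma P_pos (r : ℝ) : 0 < P θ r := by
  apply Real.rpow_pos_of_pos
  positivity

lemma cont_integrand (hβ0 : 0 < β) :
    Continuous fun ξ : ℝ => P θ ξ * (F β N ξ + 1) ^ (N - 1) :=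
  cont_P.mul (((cont_F hβ0).add continuous_const).pow _)

lemma hasDerivAt_A (hβ0 : 0 < β) (s : ℝ) :
    HasDerivAt (A β θ N) (P θ s * (F β N s + 1) ^ (N - 1)) s :=
  ((cont_integrand hβ0).integral_hasStrictDerivAt 0 s).hasDerivAt

lemma cont_A (hβ0 : 0 < β) : Continuous (A β θ N) := by
  rw [continuous_iff_continuousAt]
  exact fun s => (hasDerivAt_A hβ0 s).continuousAt

lemma denom_pos (s : ℝ) : 0 < (F β N s + 1) ^ (N - 1) := by
  have := F_pos (β := β) (N := N) s; positivity

lemma cont_G (hβ0 : 0 < β) : Continuous (G β θ N) := by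
  apply (cont_A hβ0).div (((cont_F hβ0).add continuous_const).pow _)
  intro s
  exact ne_of_gt (denom_pos s)

lemma A_nonneg (hβ0 : 0 < β) (hs : 0 ≤ s) : 0 ≤ A β θ N s := by
  apply intervalIntegral.integral_nonneg hs
  intro x _
  have := P_pos (θ := θ) x
  have := denom_pos (β := β) (N := N) x
  positivity

lemma G_nonneg (hβ0 : 0 < β) (hs : 0 ≤ s) : 0 ≤ G β θ N s :=
  div_nonneg (A_nonneg hβ0 hs) (denom_pos s).le

lemma hasDerivAt_F (hβ0 : 0 < β) (hr : r ≠ 0) : HasDerivAt (F β N) (Fd β N r) r := by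
  have h1 : HasDerivAt (fun x : ℝ => x ^ β) (β * r ^ (β - 1)) r :=
    Real.hasDerivAt_rpow_const (Or.inl hr)
  have := ((h1.div_const ((N : ℝ) - 1)).exp)
  unfold F
  simpa [F, Fd, mul_comm, mul_div_assoc] using this

lemma hasDerivAt_G (hβ0 : 0 < β) (hr : r ≠ 0) : HasDerivAt (G β θ N) (Gd β θ N r) r := by
  have hD : HasDerivAt (fun s => (F β N s + 1) ^ (N - 1))
      (↑(N - 1) * (F β N r + 1) ^ (N - 1 - 1) * Fd β N r) r :=
    ((hasDerivAt_F hβ0 hr).add_const 1).pow _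
  exact (hasDerivAt_A hβ0 r).div hD (ne_of_gt (denom_pos r))


lemma P_le (hθpos : 0 < θ) (hs1 : 1 ≤ s) : P θ s ≤ s ^ (-θ) := by
  have hs0 : (0:ℝ) < s := lt_of_lt_of_le one_pos hs1
  have h1 : (1 + s ^ 2 : ℝ) ^ (-(θ/2)) ≤ (s ^ 2 : ℝ) ^ (-(θ/2)) :=
    Real.rpow_le_rpow_of_nonpos (by positivity) (by linarith [sq_nonneg s]) (by linarith)
  have h3 : (s ^ 2 : ℝ) ^ (-(θ/2)) = s ^ (-θ) := by
    rw [← Real.rpow_natCast s 2, ← Real.rpow_mul hs0.le]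
    congr 1
    push_cast
    ring
  rw [P]
  rw [h3] at h1
  exact h1

set_option maxHeartbeats 1600000 in
lemma key_bound (hβ0 : 0 < β) (hβ2 : β ≤ 2) (hθ : 2 - β < θ) (hN : 2 ≤ N) :
    ∃ S K : ℝ, 1 ≤ S ∧ 0 ≤ K ∧ ∀ s, S ≤ s → G β θ N s ≤ K * s ^ (1 - β - θ) := by
  have hθβ : 1 < θ + β - 1 := by linarith
  have hθpos : 0 < θ := by linarith
  have hNR : (1:ℝ) ≤ (N:ℝ) - 1 := by
    have : (2:ℝ) ≤ (N:ℝ) := by exact_mod_cast hN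
    linarith
  set c : ℝ := 4 * (θ + β - 1) / β with hc_def
  have hc : 0 < c := by positivity
  set S : ℝ := max 1 (c ^ (1/β)) with hS_def
  have hS1 : 1 ≤ S := le_max_left _ _
  have hS0 : (0:ℝ) < S := lt_of_lt_of_le one_pos hS1
  have hSc : c ≤ S ^ β := by
    calc c = (c ^ (1/β)) ^ β := by
          rw [← Real.rpow_mul hc.le, one_div_mul_cancel hβ0.ne', Real.rpow_one]
      _ ≤ S ^ β := Real.rpow_le_rpow (Real.rpow_nonneg hc.le _) (le_max_right _ _) hβ0.le
  have hfrac : (θ + β - 1) * S ^ (-β) ≤ β / 4 := by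
    have h1 : S ^ (-β) = (S ^ β)⁻¹ := Real.rpow_neg hS0.le β
    have h2 : (0:ℝ) < S ^ β := Real.rpow_pos_of_pos hS0 β
    rw [h1]
    have h3 : (S ^ β)⁻¹ ≤ c⁻¹ := inv_anti₀ hc hSc
    calc (θ + β - 1) * (S ^ β)⁻¹ ≤ (θ + β - 1) * c⁻¹ := by
          apply mul_le_mul_of_nonneg_left h3 (by linarith)
      _ = β / 4 := by
          rw [hc_def]
          field_simp
  set K : ℝ := max (4/β) (G β θ N S * S ^ (θ + β - 1) + 1) with hK_def
  have hK0 : 0 ≤ K := le_trans (by positivity) (le_max_left _ _)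
  have hKβ : 1 ≤ K * β / 4 := by
    have : 4/β ≤ K := le_max_left _ _
    rw [le_div_iff₀ (by norm_num)]
    calc (1:ℝ) * 4 = (4/β) * β := by field_simp
      _ ≤ K * β := by apply mul_le_mul_of_nonneg_right this hβ0.le
  -- the comparison function
  set u : ℝ → ℝ := fun s => K * s ^ (1 - β - θ) * (F β N s + 1) ^ (N - 1) - A β θ N s with hu_def
  have hu' : ∀ s : ℝ, 0 < s → HasDerivAt u
      ((K * ((1 - β - θ) * s ^ (1 - β - θ - 1))) * (F β N s + 1) ^ (N - 1)
        + (K * s ^ (1 - β - θ)) * (↑(N - 1) * (F β N s + 1) ^ (N - 1 - 1) * Fd β N s)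
        - P θ s * (F β N s + 1) ^ (N - 1)) s := by
    intro s hs0
    have h1 : HasDerivAt (fun x : ℝ => x ^ (1 - β - θ)) ((1 - β - θ) * s ^ (1 - β - θ - 1)) s :=
      Real.hasDerivAt_rpow_const (Or.inl hs0.ne')
    have hD : HasDerivAt (fun x => (F β N x + 1) ^ (N - 1))
        (↑(N - 1) * (F β N s + 1) ^ (N - 1 - 1) * Fd β N s) s :=
      ((hasDerivAt_F hβ0 hs0.ne').add_const 1).pow _
    exact ((h1.const_mul K).mul hD).sub (hasDerivAt_A hβ0 s)
  have hu'_nonneg : ∀ s : ℝ, S ≤ s →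
      0 ≤ (K * ((1 - β - θ) * s ^ (1 - β - θ - 1))) * (F β N s + 1) ^ (N - 1)
        + (K * s ^ (1 - β - θ)) * (↑(N - 1) * (F β N s + 1) ^ (N - 1 - 1) * Fd β N s)
        - P θ s * (F β N s + 1) ^ (N - 1) := by
    intro s hs
    have hs1 : (1:ℝ) ≤ s := le_trans hS1 hs
    have hs0 : (0:ℝ) < s := lt_of_lt_of_le one_pos hs1
    set Fc := F β N s with hFc
    have hF1 : 1 ≤ Fc := F_one_le hβ0 hs0.le hN
    set E : ℝ := (Fc + 1) ^ (N - 1 - 1) with hE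
    have hE0 : 0 < E := by positivity
    have hDE : (Fc + 1) ^ (N - 1) = (Fc + 1) * E := by
      rw [hE, ← pow_succ']
      congr 1
      omega
    have hcast : (↑(N-1) : ℝ) = (N:ℝ) - 1 := by
      rw [Nat.cast_sub (by omega), Nat.cast_one]
    set x : ℝ := s ^ (-θ) with hx
    have hx0 : 0 < x := Real.rpow_pos_of_pos hs0 _
    have hPle : P θ s ≤ x := P_le hθpos hs1
    set a : ℝ := s ^ (-β) with ha
    have ha0 : 0 < a := Real.rpow_pos_of_pos hs0 _
    have haS : (θ + β - 1) * a ≤ β / 4 := by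
      refine le_trans ?_ hfrac
      apply mul_le_mul_of_nonneg_left ?_ (by linarith)
      exact Real.rpow_le_rpow_of_nonpos hS0 hs (by linarith)
    -- rewrite the rpow products
    have hsplit1 : s ^ (1 - β - θ - 1) = a * x := by
      rw [ha, hx, ← Real.rpow_add hs0]
      congr 1
      ring
    have hsplit2 : Fd β N s = Fc * (β * s ^ (β - 1) / ((N:ℝ) - 1)) := rfl
    have hsplit3 : s ^ (1 - β - θ) * s ^ (β - 1) = x := by
      rw [hx, ← Real.rpow_add hs0]
      congr 1
      ring
    have hterm2 : (K * s ^ (1 - β - θ)) * (↑(N - 1) * E * Fd β N s) = K * β * x * Fc * E := by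
      rw [hsplit2, hcast]
      have hne : (N:ℝ) - 1 ≠ 0 := by linarith
      calc K * s ^ (1 - β - θ) * (((N:ℝ) - 1) * E * (Fc * (β * s ^ (β - 1) / ((N:ℝ) - 1))))
          = K * β * (s ^ (1 - β - θ) * s ^ (β - 1)) * Fc * E * (((N:ℝ) - 1) / ((N:ℝ) - 1)) := by ring
        _ = K * β * x * Fc * E := by rw [hsplit3, div_self hne, mul_one]
    rw [hDE, hsplit1, hterm2]
    -- now pure algebra/inequalities
    have h2 : P θ s * ((Fc + 1) * E) ≤ x * ((Fc + 1) * E) := by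
      apply mul_le_mul_of_nonneg_right hPle
      positivity
    have h4 : K * ((θ + β - 1) * a) ≤ K * (β / 4) := by
      apply mul_le_mul_of_nonneg_left haS hK0
    set M : ℝ := x * ((Fc + 1) * E) with hM
    have hM0 : 0 < M := by positivity
    have e1 : K * ((1 - β - θ) * (a * x)) * ((Fc + 1) * E) = -(K * ((θ + β - 1) * a)) * M := by
      rw [hM]; ring
    have b1 : -(K * (β / 4)) * M ≤ -(K * ((θ + β - 1) * a)) * M :=
      mul_le_mul_of_nonneg_right (neg_le_neg h4) hM0.le
    have hq : 0 ≤ K * β * x * E := by positivity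
    have b2 : K * (β / 2) * M ≤ K * β * x * Fc * E := by
      have hhalf : (Fc + 1) / 2 ≤ Fc := by linarith
      calc K * (β / 2) * M = (K * β * x * E) * ((Fc + 1) / 2) := by rw [hM]; ring
        _ ≤ (K * β * x * E) * Fc := mul_le_mul_of_nonneg_left hhalf hq
        _ = K * β * x * Fc * E := by ring
    have b3 : (1:ℝ) * M ≤ K * β / 4 * M := mul_le_mul_of_nonneg_right hKβ hM0.le
    rw [e1]
    linarith only [b1, b2, b3, h2]
  -- monotonicity of u on [S, ∞)
  have humono : MonotoneOn u (Ici S) := by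
    apply monotoneOn_of_deriv_nonneg (convex_Ici S)
    · intro z hz
      exact (hu' z (lt_of_lt_of_le hS0 hz)).continuousAt.continuousWithinAt
    · intro z hz
      rw [interior_Ici] at hz
      exact (hu' z (lt_of_lt_of_le hS0 (le_of_lt hz))).differentiableAt.differentiableWithinAt
    · intro z hz
      rw [interior_Ici] at hz
      rw [(hu' z (lt_of_lt_of_le hS0 (le_of_lt hz))).deriv]
      exact hu'_nonneg z (le_of_lt hz)
  have huS : 0 ≤ u S := by
    have hGS : G β θ N S * S ^ (θ + β - 1) + 1 ≤ K := le_max_right _ _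
    have hD0 : (0:ℝ) < (F β N S + 1) ^ (N - 1) := denom_pos S
    have hx0 : (0:ℝ) < S ^ (1 - β - θ) := Real.rpow_pos_of_pos hS0 _
    have hpow : S ^ (θ + β - 1) * S ^ (1 - β - θ) = 1 := by
      rw [← Real.rpow_add hS0, show θ + β - 1 + (1 - β - θ) = 0 by ring, Real.rpow_zero]
    have hGA : G β θ N S * (F β N S + 1) ^ (N - 1) = A β θ N S := by
      rw [G, div_mul_cancel₀ _ hD0.ne']
    have hmul := mul_le_mul_of_nonneg_right hGS (le_of_lt (mul_pos hx0 hD0))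
    have hLHS : (G β θ N S * S ^ (θ + β - 1) + 1) * (S ^ (1 - β - θ) * (F β N S + 1) ^ (N - 1))
        = A β θ N S + S ^ (1 - β - θ) * (F β N S + 1) ^ (N - 1) := by
      calc (G β θ N S * S ^ (θ + β - 1) + 1) * (S ^ (1 - β - θ) * (F β N S + 1) ^ (N - 1))
          = G β θ N S * (F β N S + 1) ^ (N - 1) * (S ^ (θ + β - 1) * S ^ (1 - β - θ))
            + S ^ (1 - β - θ) * (F β N S + 1) ^ (N - 1) := by ring
        _ = _ := by rw [hpow, hGA]; ring
    rw [hu_def]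
    simp only
    rw [hLHS] at hmul
    linarith only [hmul, mul_pos hx0 hD0]
  refine ⟨S, K, hS1, hK0, fun s hs => ?_⟩
  have hus : 0 ≤ u s := le_trans huS (humono self_mem_Ici hs hs)
  have hD0 : (0:ℝ) < (F β N s + 1) ^ (N - 1) := denom_pos s
  rw [G, div_le_iff₀ hD0]
  have : A β θ N s ≤ K * s ^ (1 - β - θ) * (F β N s + 1) ^ (N - 1) := by
    have := hus
    rw [hu_def] at this
    simp only at this
    linarith
  linarith

lemma integrable_G (hβ0 : 0 < β) (hβ2 : β ≤ 2) (hθ : 2 - β < θ) (hN : 2 ≤ N) :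
    IntegrableOn (G β θ N) (Ioi (0:ℝ)) := by
  obtain ⟨S, K, hS1, hK0, hbound⟩ := key_bound hβ0 hβ2 hθ hN
  have hS0 : (0:ℝ) < S := lt_of_lt_of_le one_pos hS1
  have h1 : IntegrableOn (G β θ N) (Ioc (0:ℝ) S) :=
    ((cont_G hβ0).integrableOn_Icc).mono_set Ioc_subset_Icc_self
  have h2 : IntegrableOn (G β θ N) (Ioi S) := by
    have hint : IntegrableOn (fun s : ℝ => K * s ^ (1 - β - θ)) (Ioi S) :=
      (integrableOn_Ioi_rpow_of_lt (by linarith) hS0).const_mul K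
    apply Integrable.mono' hint ((cont_G hβ0).aestronglyMeasurable.restrict)
    rw [ae_restrict_iff' measurableSet_Ioi]
    filter_upwards with s hs
    rw [Real.norm_eq_abs, abs_of_nonneg (G_nonneg hβ0 (le_of_lt (lt_trans hS0 hs)))]
    exact hbound s (le_of_lt hs)
  have := h1.union h2
  rwa [Ioc_union_Ioi_eq_Ioi hS0.le] at this


lemma final_ineq (hβ0 : 0 < β) (hN : 2 ≤ N) (hr : 0 < r) :
    -(Gd β θ N r) + ((N:ℝ) - 1) * (Fd β N r / F β N r) * (-(G β θ N r)) ≤ -(P θ r) := by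
  have hF1 : 1 ≤ F β N r := F_one_le hβ0 hr.le hN
  have hFc0 : 0 < F β N r := F_pos r
  have hE0 : (0:ℝ) < (F β N r + 1) ^ (N - 1 - 1) := by positivity
  have hD0 : (0:ℝ) < (F β N r + 1) ^ (N - 1) := denom_pos r
  have hDE : (F β N r + 1) ^ (N - 1) = (F β N r + 1) * (F β N r + 1) ^ (N - 1 - 1) := by
    rw [← pow_succ']
    congr 1
    omega
  have hcast : (↑(N - 1) : ℝ) = (N:ℝ) - 1 := by rw [Nat.cast_sub (by omega), Nat.cast_one]
  have hN2 : (2:ℝ) ≤ (N:ℝ) := by exact_mod_cast hN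
  have hNR : (1:ℝ) ≤ (N:ℝ) - 1 := by linarith
  have hFd0 : 0 ≤ Fd β N r := by
    have h1 : 0 ≤ r ^ (β - 1) := Real.rpow_nonneg hr.le _
    rw [Fd]
    exact mul_nonneg (Real.exp_pos _).le
      (div_nonneg (mul_nonneg hβ0.le h1) (by linarith))
  have hA0 : 0 ≤ A β θ N r := A_nonneg hβ0 hr.le
  have key : A β θ N r * (((N:ℝ)-1) * (F β N r + 1) ^ (N - 1 - 1) * Fd β N r) * F β N r
      ≤ ((N:ℝ)-1) * Fd β N r * A β θ N r * (F β N r + 1) ^ (N - 1) := by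
    rw [hDE]
    have hq : 0 ≤ A β θ N r * (((N:ℝ)-1) * (F β N r + 1) ^ (N-1-1) * Fd β N r) :=
      mul_nonneg hA0 (mul_nonneg (mul_nonneg (by linarith) hE0.le) hFd0)
    calc A β θ N r * (((N:ℝ)-1) * (F β N r + 1) ^ (N-1-1) * Fd β N r) * F β N r
        ≤ A β θ N r * (((N:ℝ)-1) * (F β N r + 1) ^ (N-1-1) * Fd β N r) * (F β N r + 1) :=
          mul_le_mul_of_nonneg_left (by linarith) hq
      _ = ((N:ℝ)-1) * Fd β N r * A β θ N r * ((F β N r + 1) * (F β N r + 1) ^ (N-1-1)) := by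
          ring
  have hexp : -(Gd β θ N r) + ((N:ℝ)-1) * (Fd β N r / F β N r) * (-(G β θ N r)) + P θ r
      = (A β θ N r * (((N:ℝ)-1) * (F β N r + 1) ^ (N-1-1) * Fd β N r) * F β N r
          - ((N:ℝ)-1) * Fd β N r * A β θ N r * (F β N r + 1) ^ (N - 1))
        / (((F β N r + 1) ^ (N - 1)) ^ 2 * F β N r) := by
    have h1 := hFc0.ne'
    have h2 := hD0.ne'
    rw [Gd, G, hcast]
    field_simp
    ring
  have hden : (0:ℝ) < ((F β N r + 1) ^ (N - 1)) ^ 2 * F β N r := by positivity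
  have hnum : A β θ N r * (((N:ℝ)-1) * (F β N r + 1) ^ (N-1-1) * Fd β N r) * F β N r
      - ((N:ℝ)-1) * Fd β N r * A β θ N r * (F β N r + 1) ^ (N - 1) ≤ 0 := by linarith
  have hfr : (A β θ N r * (((N:ℝ)-1) * (F β N r + 1) ^ (N-1-1) * Fd β N r) * F β N r
      - ((N:ℝ)-1) * Fd β N r * A β θ N r * (F β N r + 1) ^ (N - 1))
      / (((F β N r + 1) ^ (N - 1)) ^ 2 * F β N r) ≤ 0 :=
    div_nonpos_of_nonpos_of_nonneg hnum hden.le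
  rw [← hexp] at hfr
  linarith

end Stmt7Aux

open Stmt7Aux in
/-- Lemma 7.6 (supersolution inequality): with `f(r) = exp(r^β/(N−1))`,
`ρ(r) = (1+r²)^{-θ/2}`, `β ∈ (0,2]`, `θ > 2−β`, the function
`h(r) = ∫_r^∞ [∫₀^s ρ(ξ)(f(ξ)+1)^{N−1} dξ]/(f(s)+1)^{N−1} ds` satisfies
`h'' + (N−1)(f'/f) h' ≤ −ρ` on `(0,∞)`. -/
theorem stmt7 (β θ : ℝ) (N : ℕ) (hβ0 : 0 < β) (hβ2 : β ≤ 2)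
    (hθ : 2 - β < θ) (hN : 2 ≤ N) :
    let f : ℝ → ℝ := fun r => Real.exp (r ^ β / (N - 1 : ℝ))
    let ρ : ℝ → ℝ := fun r => (1 + r ^ 2) ^ (-(θ / 2))
    let h : ℝ → ℝ := fun r => ∫ s in Ioi r,
      (∫ ξ in (0:ℝ)..s, ρ ξ * (f ξ + 1) ^ (N - 1)) / (f s + 1) ^ (N - 1)
    ∀ r : ℝ, 0 < r →
      deriv (deriv h) r + (N - 1 : ℝ) * (deriv f r / f r) * deriv h r ≤ -ρ r := by
  intro f ρ h r hr
  have hfF : f = F β N := rfl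
  have hρP : ρ = P θ := rfl
  have hhG : h = fun x => ∫ s in Ioi x, G β θ N s := rfl
  have hint : IntegrableOn (G β θ N) (Ioi (0:ℝ)) := integrable_G hβ0 hβ2 hθ hN
  have hcontG : Continuous (G β θ N) := cont_G hβ0
  set H : ℝ → ℝ := fun y => (∫ s in Ioi (0:ℝ), G β θ N s) - ∫ s in (0:ℝ)..y, G β θ N s with hH
  have heq : ∀ y ∈ Ioi (0:ℝ), h y = H y := by
    intro y hy
    rw [mem_Ioi] at hy
    have hsplit : ∫ s in Ioi (0:ℝ), G β θ N s
        = (∫ s in Ioc (0:ℝ) y, G β θ N s) + ∫ s in Ioi y, G β θ N s := by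
      rw [← setIntegral_union (Ioc_disjoint_Ioi le_rfl) measurableSet_Ioi
        (hint.mono_set Ioc_subset_Ioi_self) (hint.mono_set (Ioi_subset_Ioi hy.le)),
        Ioc_union_Ioi_eq_Ioi hy.le]
    have h1 : h y = ∫ s in Ioi y, G β θ N s := by rw [hhG]
    rw [h1, hH]
    simp only
    rw [intervalIntegral.integral_of_le hy.le, hsplit]
    ring
  have hDeriv : ∀ x ∈ Ioi (0:ℝ), HasDerivAt h (-(G β θ N x)) x := by
    intro x hx
    have hHd : HasDerivAt H (-(G β θ N x)) x :=
      HasDerivAt.const_sub _ (hcontG.integral_hasStrictDerivAt 0 x).hasDerivAt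
    exact hHd.congr_of_eventuallyEq (Filter.eventuallyEq_of_mem (Ioi_mem_nhds hx) heq)
  have hderiv_h_eq : ∀ x ∈ Ioi (0:ℝ), deriv h x = -(G β θ N x) :=
    fun x hx => (hDeriv x hx).deriv
  have hd2 : deriv (deriv h) r = -(Gd β θ N r) := by
    have hev : deriv h =ᶠ[nhds r] fun x => -(G β θ N x) :=
      Filter.eventuallyEq_of_mem (Ioi_mem_nhds hr) hderiv_h_eq
    rw [Filter.EventuallyEq.deriv_eq hev]
    exact ((hasDerivAt_G hβ0 hr.ne').neg).deriv
  have hdf : deriv f r = Fd β N r := by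
    rw [hfF]
    exact (hasDerivAt_F hβ0 hr.ne').deriv
  rw [hd2, hdf, hderiv_h_eq r (mem_Ioi.mpr hr), hρP, hfF]
  exact final_ineq hβ0 hN hr
end
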